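/- arXiv:math/0201153 — 2 statements merged into one kernel-verified Lean document; each statement's English description precedes it below -/
import Mathlib

section
/- Let h, ĥ be metrics on a compact manifold M with T := h - ĥ satisfying |T|_h ≪ 1 so that (1/2)h ≤ g(·,t) ≤ 2h for the interpolation g(z,t) = h(z) - (1-φ(t))T(z), where φ is a cutoff with |φ'| ≤ 2/L, |φ''| ≤ 4/L². Then there is a universal constant K₀ such that the scalar curvatures of ḡ = g + dt² and of the slice metric g satisfy |R_{ḡ} - R_g| ≤ (K₀/L²)|T|_h on M × ℝ. -/
open Matrix

open scoped MatrixOrder in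
noncomputable def Matrix.PosSemidef.sqrt {m : ℕ} {A : Matrix (Fin m) (Fin m) ℝ}
    (_hA : A.PosSemidef) : Matrix (Fin m) (Fin m) ℝ := CFC.sqrt A

open scoped MatrixOrder in
lemma Matrix.PosSemidef.posSemidef_sqrt {m : ℕ} {A : Matrix (Fin m) (Fin m) ℝ}
    (hA : A.PosSemidef) : hA.sqrt.PosSemidef := (CFC.sqrt_nonneg A).posSemidef

open scoped MatrixOrder in
lemma Matrix.PosSemidef.sqrt_mul_self {m : ℕ} {A : Matrix (Fin m) (Fin m) ℝ}
    (hA : A.PosSemidef) : hA.sqrt * hA.sqrt = A := CFC.sqrt_mul_sqrt_self A hA.nonneg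

namespace Stmt10Aux

variable {m : ℕ}

open scoped MatrixOrder in
lemma posSemidef_iff_eq_transpose_mul_self {A : Matrix (Fin m) (Fin m) ℝ} :
    A.PosSemidef ↔ ∃ B : Matrix (Fin m) (Fin m) ℝ, A = Bᴴ * B := by
  refine ⟨fun h => ?_, fun ⟨B, hB⟩ => hB ▸ posSemidef_conjTranspose_mul_self B⟩
  obtain ⟨B, hB⟩ := CStarAlgebra.nonneg_iff_eq_star_mul_self.mp h.nonneg
  exact ⟨B, hB⟩

abbrev Mat (m : ℕ) := Matrix (Fin m) (Fin m) ℝ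

lemma trace_nonneg_of_psd {A : Mat m} (hA : A.PosSemidef) : 0 ≤ A.trace := by
  obtain ⟨B, rfl⟩ := posSemidef_iff_eq_transpose_mul_self.mp hA
  have : (Bᴴ * B).trace = ∑ j, ∑ i, (B i j) ^ 2 := by
    simp [Matrix.trace, Matrix.diag, Matrix.mul_apply, Matrix.conjTranspose_apply, sq]
  rw [this]
  positivity

lemma trace_mul_nonneg {A B : Mat m} (hA : A.PosSemidef) (hB : B.PosSemidef) :
    0 ≤ (A * B).trace := by
  have h1 : A * B = A * (hB.sqrt * hB.sqrt) := by rw [hB.sqrt_mul_self]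
  have h2 : (A * (hB.sqrt * hB.sqrt)).trace = (hB.sqrt * A * hB.sqrtᴴ).trace := by
    rw [hB.posSemidef_sqrt.isHermitian.eq]
    rw [← Matrix.mul_assoc, Matrix.trace_mul_comm, Matrix.mul_assoc]
  rw [h1, h2]
  exact trace_nonneg_of_psd (hA.mul_mul_conjTranspose_same hB.sqrt)

lemma symm_conj_psd {Q : Mat m} (hQ : Q.PosSemidef) {T : Mat m} (hT : T.IsSymm) :
    (T * Q * T).PosSemidef := by
  have := hQ.conjTranspose_mul_mul_same T
  rwa [conjTranspose_eq_transpose_of_trivial, hT.eq] at this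

end Stmt10Aux

namespace Stmt10Aux

lemma psd_isSymm {P : Mat m} (hP : P.PosSemidef) : P.IsSymm := by
  have := hP.isHermitian
  rwa [Matrix.IsHermitian, conjTranspose_eq_transpose_of_trivial] at this

lemma isSymm_inv {P : Mat m} (hP : P.IsSymm) : (P⁻¹).IsSymm := by
  rw [Matrix.IsSymm, Matrix.transpose_nonsing_inv, hP.eq]

lemma inv_antitone {A B : Mat m} (hA : A.PosDef) (hB : B.PosDef)
    (hAB : (B - A).PosSemidef) : (A⁻¹ - B⁻¹).PosSemidef := by
  classical
  set C := hA.posSemidef.sqrt with hCdef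
  have hC : C.PosSemidef := hA.posSemidef.posSemidef_sqrt
  have hCC : C * C = A := hA.posSemidef.sqrt_mul_self
  have hCdet : IsUnit C.det := by
    refine isUnit_iff_ne_zero.mpr fun h => ?_
    have : A.det = 0 := by rw [← hCC, Matrix.det_mul, h, mul_zero]
    exact (ne_of_gt hA.det_pos) this
  have hCi : C * C⁻¹ = 1 := Matrix.mul_nonsing_inv _ hCdet
  have hCi' : C⁻¹ * C = 1 := Matrix.nonsing_inv_mul _ hCdet
  have hCinvsymm : (C⁻¹).IsSymm := isSymm_inv (psd_isSymm hC)
  set M := C⁻¹ * B * C⁻¹ with hMdef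
  have hMdet : IsUnit M.det := by
    have hdet : M.det = C⁻¹.det * B.det * C⁻¹.det := by
      rw [hMdef, Matrix.det_mul, Matrix.det_mul]
    have h1 : C⁻¹.det ≠ 0 :=
      isUnit_iff_ne_zero.mp (Matrix.isUnit_det_of_left_inverse hCi)
    refine isUnit_iff_ne_zero.mpr ?_
    rw [hdet]
    exact mul_ne_zero (mul_ne_zero h1 (ne_of_gt hB.det_pos)) h1
  have hMpsd : M.PosSemidef := by
    have := hB.posSemidef.mul_mul_conjTranspose_same C⁻¹
    rwa [conjTranspose_eq_transpose_of_trivial, hCinvsymm.eq] at this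
  have hMinv_psd : (M⁻¹).PosSemidef := hMpsd.inv
  set N := hMinv_psd.sqrt with hNdef
  have hN : N.PosSemidef := hMinv_psd.posSemidef_sqrt
  have hNN : N * N = M⁻¹ := hMinv_psd.sqrt_mul_self
  have hMinvdet : IsUnit (M⁻¹).det :=
    Matrix.isUnit_det_of_left_inverse (Matrix.mul_nonsing_inv M hMdet)
  have hNdet : IsUnit N.det := by
    refine isUnit_iff_ne_zero.mpr fun h => ?_
    have : (M⁻¹).det = 0 := by rw [← hNN, Matrix.det_mul, h, mul_zero]
    exact (isUnit_iff_ne_zero.mp hMinvdet) this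
  have hNi : N * N⁻¹ = 1 := Matrix.mul_nonsing_inv _ hNdet
  have hNi' : N⁻¹ * N = 1 := Matrix.nonsing_inv_mul _ hNdet
  have hMeq : M = N⁻¹ * N⁻¹ := by
    rw [← Matrix.nonsing_inv_nonsing_inv M hMdet, ← hNN, Matrix.mul_inv_rev]
  -- M - 1 is psd
  have hM1 : (M - 1).PosSemidef := by
    have key : M - 1 = C⁻¹ * (B - A) * C⁻¹ := by
      have h1 : C⁻¹ * A * C⁻¹ = 1 := by
        rw [← hCC, ← Matrix.mul_assoc, hCi', Matrix.one_mul, hCi]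
      rw [hMdef, Matrix.mul_sub, Matrix.sub_mul, h1]
    rw [key]
    exact symm_conj_psd hAB hCinvsymm
  -- 1 - M⁻¹ is psd
  have hNsymm : N.IsSymm := psd_isSymm hN
  have h1M : (1 - M⁻¹).PosSemidef := by
    have key : N * (M - 1) * N = 1 - M⁻¹ := by
      have h1 : N * M * N = 1 := by
        rw [hMeq, ← Matrix.mul_assoc, hNi, Matrix.one_mul, hNi']
      rw [Matrix.mul_sub, Matrix.sub_mul, h1, Matrix.mul_one, hNN]
    rw [← key]
    exact symm_conj_psd hM1 hNsymm
  -- transport back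
  have hMinv : M⁻¹ = C * B⁻¹ * C := by
    rw [hMdef, Matrix.mul_inv_rev, Matrix.mul_inv_rev,
      Matrix.nonsing_inv_nonsing_inv C hCdet, Matrix.mul_assoc]
  have key : C⁻¹ * (1 - M⁻¹) * C⁻¹ = A⁻¹ - B⁻¹ := by
    have h1 : C⁻¹ * (1 : Mat m) * C⁻¹ = A⁻¹ := by
      rw [Matrix.mul_one, ← Matrix.mul_inv_rev, hCC]
    have h2 : C⁻¹ * M⁻¹ * C⁻¹ = B⁻¹ := by
      rw [hMinv]
      simp only [← Matrix.mul_assoc]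
      rw [hCi', Matrix.one_mul, Matrix.mul_assoc, hCi, Matrix.mul_one]
    rw [Matrix.mul_sub, Matrix.sub_mul, h1, h2]
  rw [← key]
  exact symm_conj_psd h1M hCinvsymm

end Stmt10Aux

namespace Stmt10Aux

lemma trace_sq_nonneg {Q T : Mat m} (hQ : Q.PosSemidef) (hT : T.IsSymm) :
    0 ≤ (T * Q * (T * Q)).trace := by
  have : T * Q * (T * Q) = (T * Q * T) * Q := by noncomm_ring
  rw [this]
  exact trace_mul_nonneg (symm_conj_psd hQ hT) hQ

lemma trace_sq_mono {Q Q' T : Mat m} (hQ : Q.PosSemidef) (hQ' : Q'.PosSemidef)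
    (hT : T.IsSymm) (hle : (Q' - Q).PosSemidef) :
    (T * Q * (T * Q)).trace ≤ (T * Q' * (T * Q')).trace := by
  have e : T * Q' * (T * Q') - T * Q * (T * Q)
      = (T * Q' * T) * (Q' - Q) + (T * (Q' - Q) * T) * Q := by noncomm_ring
  have h1 : 0 ≤ ((T * Q' * T) * (Q' - Q)).trace :=
    trace_mul_nonneg (symm_conj_psd hQ' hT) hle
  have h2 : 0 ≤ ((T * (Q' - Q) * T) * Q).trace :=
    trace_mul_nonneg (symm_conj_psd hle hT) hQ
  have := congrArg Matrix.trace e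
  rw [Matrix.trace_sub, Matrix.trace_add] at this
  linarith

lemma diag_sq_le_trace_sq {X : Mat m} (hX : X.IsSymm) :
    (X.trace) ^ 2 ≤ (m : ℝ) * (X * X).trace := by
  have h1 : (X.trace) ^ 2 ≤ (m : ℝ) * ∑ i, (X i i) ^ 2 := by
    have := sq_sum_le_card_mul_sum_sq (s := (Finset.univ : Finset (Fin m)))
      (f := fun i => X i i)
    simpa [Matrix.trace, Matrix.diag] using this
  have h2 : ∑ i, (X i i) ^ 2 ≤ (X * X).trace := by
    have e : (X * X).trace = ∑ i, ∑ j, (X i j) ^ 2 := by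
      simp only [Matrix.trace, Matrix.diag, Matrix.mul_apply, sq]
      refine Finset.sum_congr rfl fun i _ => Finset.sum_congr rfl fun j _ => ?_
      rw [hX.apply]
    rw [e]
    refine Finset.sum_le_sum fun i _ => ?_
    exact Finset.single_le_sum (f := fun j => (X i j) ^ 2)
      (fun j _ => sq_nonneg _) (Finset.mem_univ i)
  nlinarith [h2, Nat.cast_nonneg (α := ℝ) m]

lemma trace_cs {Q T : Mat m} (hQ : Q.PosDef) (hT : T.IsSymm) :
    ((Q * T).trace) ^ 2 ≤ (m : ℝ) * ((Q * T * (Q * T)).trace) := by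
  classical
  set C := hQ.posSemidef.sqrt with hCdef
  have hC : C.PosSemidef := hQ.posSemidef.posSemidef_sqrt
  have hCC : C * C = Q := hQ.posSemidef.sqrt_mul_self
  have hCsymm : C.IsSymm := psd_isSymm hC
  set X := C * T * C with hXdef
  have hXsymm : X.IsSymm := by
    rw [Matrix.IsSymm, hXdef, Matrix.transpose_mul, Matrix.transpose_mul,
      hCsymm.eq, hT.eq, Matrix.mul_assoc]
  have htr : X.trace = (Q * T).trace := by
    rw [hXdef, Matrix.trace_mul_comm, ← Matrix.mul_assoc, hCC]
  have htr2 : (X * X).trace = (Q * T * (Q * T)).trace := by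
    have e1 : X * X = C * ((T * Q * T) * C) := by
      rw [hXdef, ← hCC]; noncomm_ring
    have e2 : Q * T * (Q * T) = Q * (T * Q * T) := by noncomm_ring
    rw [e1, e2, Matrix.trace_mul_comm, Matrix.mul_assoc, hCC, Matrix.trace_mul_comm]
  rw [← htr, ← htr2]
  exact diag_sq_le_trace_sq hXsymm

end Stmt10Aux

namespace Stmt10Aux

lemma posDef_smul {A : Mat m} (hA : A.PosDef) {c : ℝ} (hc : 0 < c) : (c • A).PosDef := by
  refine Matrix.PosDef.of_dotProduct_mulVec_pos ?_ fun x hx => ?_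
  · have h := hA.isHermitian
    rw [Matrix.IsHermitian] at h ⊢
    rw [Matrix.conjTranspose_smul]
    simp [h, (psd_isSymm hA.posSemidef).eq]
  · have h := hA.dotProduct_mulVec_pos hx
    rw [Matrix.smul_mulVec, dotProduct_smul]
    exact mul_pos hc h

lemma trace_conv (P S : Mat m) :
    (P * S * (P * S)).trace = (S * P * (S * P)).trace := by
  have e1 : P * S * (P * S) = P * (S * P * S) := by noncomm_ring
  have e2 : S * P * (S * P) = (S * P * S) * P := by noncomm_ring
  rw [e1, e2, Matrix.trace_mul_comm]

end Stmt10Aux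

open Stmt10Aux

set_option maxHeartbeats 1000000

/-- Estimate `|R_ḡ - R_g| ≤ (K₀/L²)|T|_h` for the interpolation metric
`g(·,t) = h - (1-φ(t))T` on the cylinder.  Pointwise, with `H` the matrix of `h`,
`G` that of the slice metric `g(·,t)` (so `(1/2)H ≤ G ≤ 2H`), `T = h - ĥ` symmetric with
`|T|_H = √tr((H⁻¹T)²) ≤ 1`, and `a = φ'(t)`, `b = φ''(t)` with `|a| ≤ 2/L`, `|b| ≤ 4/L²`,
the generalized-cylinder formula gives
`R_ḡ - R_g = -tr(G⁻¹(bT)) - (1/4)tr(G⁻¹(aT))² + (3/4)tr((G⁻¹(aT))²)`, whence the bound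
with a constant `K₀` depending only on the dimension. -/
theorem stmt10 (m : ℕ) :
    ∃ K₀ > (0 : ℝ), ∀ L : ℝ, 0 < L →
      ∀ H G T : Matrix (Fin m) (Fin m) ℝ, H.PosDef → G.PosDef → T.IsSymm →
        Real.sqrt ((H⁻¹ * T * (H⁻¹ * T)).trace) ≤ 1 →
        (G - (2⁻¹ : ℝ) • H).PosSemidef → ((2 : ℝ) • H - G).PosSemidef →
        ∀ a b : ℝ, |a| ≤ 2 / L → |b| ≤ 4 / L ^ 2 →
          ∀ Rbar Rg : ℝ,
            Rbar - Rg = -((G⁻¹ * (b • T)).trace)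
              - (1 / 4) * ((G⁻¹ * (a • T)).trace) ^ 2
              + (3 / 4) * ((G⁻¹ * (a • T)) * (G⁻¹ * (a • T))).trace →
            |Rbar - Rg| ≤ K₀ / L ^ 2 * Real.sqrt ((H⁻¹ * T * (H⁻¹ * T)).trace) := by
  classical
  refine ⟨12 * m + 20, by positivity, ?_⟩
  intro L hL H G T hH hG hT hTnorm hGH hHG a b ha hb Rbar Rg heq
  set s2 : ℝ := (H⁻¹ * T * (H⁻¹ * T)).trace with hs2def
  set s : ℝ := Real.sqrt s2 with hsdef
  have hHinv : (H⁻¹).PosDef := hH.inv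
  have hGinv : (G⁻¹).PosDef := hG.inv
  -- s2 ≥ 0
  have hs2nonneg : 0 ≤ s2 := by
    rw [hs2def, trace_conv]
    exact trace_sq_nonneg hHinv.posSemidef hT
  have hs0 : 0 ≤ s := Real.sqrt_nonneg _
  have hs1 : s ≤ 1 := hTnorm
  have hssq : s ^ 2 = s2 := Real.sq_sqrt hs2nonneg
  have hs2les : s2 ≤ s := by nlinarith
  -- G⁻¹ ≤ 2•H⁻¹
  have hhalfH : ((2⁻¹ : ℝ) • H).PosDef := posDef_smul hH (by norm_num)
  have hinveq : ((2⁻¹ : ℝ) • H)⁻¹ = (2 : ℝ) • H⁻¹ := by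
    refine Matrix.inv_eq_right_inv ?_
    rw [Matrix.smul_mul, Matrix.mul_smul, smul_smul,
      Matrix.mul_nonsing_inv _ (isUnit_iff_ne_zero.mpr (ne_of_gt hH.det_pos))]
    norm_num
  have hQle : ((2 : ℝ) • H⁻¹ - G⁻¹).PosSemidef := by
    have := inv_antitone hhalfH hG hGH
    rwa [hinveq] at this
  have h2Hinv : ((2 : ℝ) • H⁻¹).PosSemidef := (posDef_smul hHinv (by norm_num)).posSemidef
  -- t2 bounds
  set t2 : ℝ := (G⁻¹ * T * (G⁻¹ * T)).trace with ht2def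
  have ht2nonneg : 0 ≤ t2 := by
    rw [ht2def, trace_conv]
    exact trace_sq_nonneg hGinv.posSemidef hT
  have ht2le : t2 ≤ 4 * s2 := by
    have h1 : (T * G⁻¹ * (T * G⁻¹)).trace ≤ (T * ((2:ℝ) • H⁻¹) * (T * ((2:ℝ) • H⁻¹))).trace :=
      trace_sq_mono hGinv.posSemidef h2Hinv hT hQle
    have h2 : T * ((2:ℝ) • H⁻¹) * (T * ((2:ℝ) • H⁻¹)) = (4:ℝ) • (T * H⁻¹ * (T * H⁻¹)) := by
      simp only [Matrix.mul_smul, Matrix.smul_mul, smul_smul]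
      norm_num
    rw [h2, Matrix.trace_smul, smul_eq_mul] at h1
    rw [ht2def, trace_conv, hs2def, trace_conv (H⁻¹) T]
    exact h1
  -- t1 bounds
  set t1 : ℝ := (G⁻¹ * T).trace with ht1def
  have ht1sq : t1 ^ 2 ≤ (m : ℝ) * t2 := trace_cs hGinv hT
  have ht1sq' : t1 ^ 2 ≤ 4 * m * s2 := by nlinarith [Nat.cast_nonneg (α := ℝ) m]
  have ht1abs : |t1| ≤ 2 * ((m : ℝ) + 1) * s := by
    have h1 : t1 ^ 2 ≤ (2 * ((m : ℝ) + 1) * s) ^ 2 := by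
      have hm : 4 * (m : ℝ) ≤ (2 * ((m : ℝ) + 1)) ^ 2 := by nlinarith [Nat.cast_nonneg (α := ℝ) m]
      nlinarith [Nat.cast_nonneg (α := ℝ) m]
    calc |t1| = Real.sqrt (t1 ^ 2) := (Real.sqrt_sq_eq_abs t1).symm
      _ ≤ Real.sqrt ((2 * ((m : ℝ) + 1) * s) ^ 2) := Real.sqrt_le_sqrt h1
      _ = 2 * ((m : ℝ) + 1) * s := Real.sqrt_sq (by positivity)
  -- rewrite heq
  have heq' : Rbar - Rg = -(b * t1) - (1/4) * (a * t1) ^ 2 + (3/4) * (a ^ 2 * t2) := by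
    have h3 : (G⁻¹ * (a • T)) * (G⁻¹ * (a • T)) = (a * a) • (G⁻¹ * T * (G⁻¹ * T)) := by
      simp only [Matrix.mul_smul, Matrix.smul_mul, smul_smul]
    rw [heq, h3, Matrix.mul_smul, Matrix.trace_smul, Matrix.mul_smul, Matrix.trace_smul,
      Matrix.trace_smul]
    simp only [smul_eq_mul, ← ht1def, ← ht2def]
    ring
  -- scalar bounds
  have hL2 : (0:ℝ) < L ^ 2 := by positivity
  have ha2 : a ^ 2 ≤ 4 / L ^ 2 := by
    have h := pow_le_pow_left₀ (abs_nonneg a) ha 2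
    rw [sq_abs, div_pow] at h
    norm_num at h
    exact h
  have hbabs : 0 ≤ |b| := abs_nonneg b
  -- assemble
  have htri : |Rbar - Rg| ≤ |b| * |t1| + (1/4) * (a * t1) ^ 2 + (3/4) * (a ^ 2 * t2) := by
    rw [heq']
    calc |(-(b * t1) - (1/4) * (a * t1) ^ 2 + (3/4) * (a ^ 2 * t2))|
        ≤ |(-(b * t1) - (1/4) * (a * t1) ^ 2)| + |(3/4) * (a ^ 2 * t2)| := abs_add_le _ _
      _ ≤ |(-(b * t1))| + |(1/4) * (a * t1) ^ 2| + |(3/4) * (a ^ 2 * t2)| := by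
          have := abs_sub (-(b * t1)) ((1/4) * (a * t1) ^ 2)
          linarith
      _ = |b| * |t1| + (1/4) * (a * t1) ^ 2 + (3/4) * (a ^ 2 * t2) := by
          rw [abs_neg, abs_mul]
          rw [abs_of_nonneg (by positivity : (0:ℝ) ≤ (1/4) * (a * t1) ^ 2)]
          rw [abs_of_nonneg (by nlinarith : (0:ℝ) ≤ (3/4) * (a ^ 2 * t2))]
  have hT1 : |b| * |t1| ≤ (4 / L ^ 2) * (2 * ((m : ℝ) + 1) * s) :=
    mul_le_mul hb ht1abs (abs_nonneg _) (le_trans hbabs hb)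
  have hT2 : (1/4) * (a * t1) ^ 2 ≤ (4 * (m : ℝ) / L ^ 2) * s := by
    have h1 : (a * t1) ^ 2 = a ^ 2 * t1 ^ 2 := by ring
    have h2 : a ^ 2 * t1 ^ 2 ≤ (4 / L ^ 2) * (4 * m * s2) :=
      mul_le_mul ha2 ht1sq' (sq_nonneg _) (by positivity)
    have h3 : (4:ℝ) * m * s2 ≤ 4 * m * s := by
      have hm : (0:ℝ) ≤ 4 * m := by positivity
      calc (4:ℝ) * m * s2 = (4 * m) * s2 := by ring
        _ ≤ (4 * m) * s := mul_le_mul_of_nonneg_left hs2les hm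
        _ = 4 * m * s := by ring
    have h4 : (4 / L ^ 2) * (4 * (m:ℝ) * s2) ≤ (4 / L ^ 2) * (4 * (m:ℝ) * s) :=
      mul_le_mul_of_nonneg_left h3 (by positivity)
    have h5 : (1/4) * ((4 / L ^ 2) * (4 * (m:ℝ) * s)) = 4 * (m:ℝ) / L ^ 2 * s := by
      field_simp
    calc (1/4) * (a * t1) ^ 2 = (1/4) * (a ^ 2 * t1 ^ 2) := by ring
      _ ≤ (1/4) * ((4 / L ^ 2) * (4 * (m:ℝ) * s2)) := by linarith
      _ ≤ (1/4) * ((4 / L ^ 2) * (4 * (m:ℝ) * s)) := by linarith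
      _ = 4 * (m:ℝ) / L ^ 2 * s := h5
  have hT3 : (3/4) * (a ^ 2 * t2) ≤ (12 / L ^ 2) * s := by
    have h2 : a ^ 2 * t2 ≤ (4 / L ^ 2) * (4 * s2) :=
      mul_le_mul ha2 (by linarith) ht2nonneg (by positivity)
    have h3 : (4:ℝ) * s2 ≤ 4 * s := by linarith
    have h4 : (4 / L ^ 2) * (4 * s2) ≤ (4 / L ^ 2) * (4 * s) :=
      mul_le_mul_of_nonneg_left h3 (by positivity)
    have h5 : (3/4) * ((4 / L ^ 2) * (4 * s)) = 12 / L ^ 2 * s := by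
      field_simp
      ring
    calc (3/4) * (a ^ 2 * t2) ≤ (3/4) * ((4 / L ^ 2) * (4 * s2)) := by linarith
      _ ≤ (3/4) * ((4 / L ^ 2) * (4 * s)) := by linarith
      _ = 12 / L ^ 2 * s := h5
  have hsum := add_le_add (add_le_add hT1 hT2) hT3
  have hcollect : (4 / L ^ 2) * (2 * ((m : ℝ) + 1) * s) + (4 * (m : ℝ) / L ^ 2) * s
      + (12 / L ^ 2) * s = ((12 * (m : ℝ) + 20) / L ^ 2) * s := by
    field_simp
    ring
  linarith [htri]
end

section
/- Suppose that for every ε > 0 and every κ > ω(M) there is a conformal class C on M with Y_C(M) ≥ Y(M) - ε and κ ≤ W_C(M) ≤ κ + ε (Theorem A). Then the closure in ℝ² of the image K(M) = {(Y_C(M), W_C(M)) : C ∈ 𝒞(M)} intersected with the vertical line {y = Y(M)} equals {(Y(M), w) : w ≥ ω(M)}. -/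
/-!
A point `(Y(M), w)` of the closure of `K(M)` is the limit of points `(Y cᵢ, W cᵢ)`; then `(cᵢ)` is a
Yamabe sequence and `W cᵢ → w`, so `w ≥ ω(M)` by the definition of `ω(M)`. Conversely, for
`w ≥ ω(M)` Theorem A applied with `κ` slightly above `w` yields classes whose points lie
arbitrarily close to `(Y(M), w)`, because `Y c ≤ Y(M)` always.
-/

open Filter Topology Set

theorem le_of_le_liminf_coe_of_tendsto {ι : Type*} {l : Filter ι} [l.NeBot] {w : ι → ℝ}
    {a b : ℝ} (hw : Tendsto w l (𝓝 b)) (h : (a : EReal) ≤ liminf (fun i => (w i : EReal)) l) :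
    a ≤ b := by
  rwa [(EReal.tendsto_coe.2 hw).liminf_eq, EReal.coe_le_coe_iff] at h

section

variable {𝒞 : Type*} {Y W : 𝒞 → ℝ} {YM ω : ℝ}

theorem le_snd_of_mem_closure_range_of_fst_eq
    (hω : ∀ s : ℕ → 𝒞, Tendsto (fun i => Y (s i)) atTop (𝓝 YM) →
      (ω : EReal) ≤ liminf (fun i => (W (s i) : EReal)) atTop)
    {p : ℝ × ℝ} (hp : p ∈ closure (range fun c => (Y c, W c))) (hp1 : p.1 = YM) :
    ω ≤ p.2 := by
  obtain ⟨x, hx, hxp⟩ := mem_closure_iff_seq_limit.1 hp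
  choose c hc using hx
  obtain rfl : (fun n => (Y (c n), W (c n))) = x := funext hc
  have hY : Tendsto (fun n => Y (c n)) atTop (𝓝 YM) := hp1 ▸ (continuous_fst.tendsto p).comp hxp
  have hW : Tendsto (fun n => W (c n)) atTop (𝓝 p.2) := (continuous_snd.tendsto p).comp hxp
  exact le_of_le_liminf_coe_of_tendsto hW (hω c hY)

theorem mk_mem_closure_range_of_le (hle : ∀ c, Y c ≤ YM)
    (hA : ∀ ε > (0 : ℝ), ∀ κ > ω, ∃ c, YM - ε ≤ Y c ∧ κ ≤ W c ∧ W c ≤ κ + ε)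
    {w : ℝ} (hw : ω ≤ w) : (YM, w) ∈ closure (range fun c => (Y c, W c)) := by
  refine Metric.mem_closure_iff.2 fun ε hε => ?_
  obtain ⟨c, hYc, hWc, hWc'⟩ := hA (ε / 2) (half_pos hε) (w + ε / 4) (by linarith)
  refine ⟨_, ⟨c, rfl⟩, ?_⟩
  rw [Prod.dist_eq, Real.dist_eq, Real.dist_eq]
  refine max_lt ?_ ?_ <;> rw [abs_lt] <;> constructor <;> linarith [hle c]

end

/-- Corollary B.  `𝒞` is the set of conformal classes on `M`, `Y c` and `W c` the Yamabe
and Weyl constants, `YM = Y(M)` the Yamabe invariant (so `Y c ≤ YM` for all `c`) and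
`ω = ω(M)` (so every Yamabe sequence has `liminf W ≥ ω`).  If Theorem A holds — for all
`ε > 0` and `κ > ω` there is `c` with `Y c ≥ YM - ε` and `κ ≤ W c ≤ κ + ε` — then the
closure of the image `K(M) = {(Y c, W c)}` meets the Sobolev line `{y = YM}` exactly in
`{(YM, w) : w ≥ ω}`. -/
theorem stmt12 {𝒞 : Type*} (Y W : 𝒞 → ℝ) (YM ω : ℝ)
    (hle : ∀ c, Y c ≤ YM)
    (hA : ∀ ε > (0 : ℝ), ∀ κ > ω, ∃ c, YM - ε ≤ Y c ∧ κ ≤ W c ∧ W c ≤ κ + ε)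
    (hω : ∀ s : ℕ → 𝒞, Tendsto (fun i => Y (s i)) atTop (nhds YM) →
      (↑ω : EReal) ≤ Filter.atTop.liminf fun i => ((W (s i) : EReal))) :
    closure {p : ℝ × ℝ | ∃ c, p = (Y c, W c)} ∩ {p : ℝ × ℝ | p.1 = YM} =
      {p : ℝ × ℝ | p.1 = YM ∧ ω ≤ p.2} := by
  have hK : {p : ℝ × ℝ | ∃ c, p = (Y c, W c)} = range fun c => (Y c, W c) := by
    ext; simp [eq_comm]
  rw [hK]
  ext ⟨y, w⟩
  constructor
  · rintro ⟨hp, rfl : y = YM⟩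
    exact ⟨rfl, le_snd_of_mem_closure_range_of_fst_eq hω hp rfl⟩
  · rintro ⟨rfl : y = YM, hw⟩
    exact ⟨mk_mem_closure_range_of_le hle hA hw, rfl⟩
end
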